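/- Let S be a dense subsemigroup of (T,+), e ∈ E(T), and (X,⟨T_s⟩_{s∈S}) a dynamical system. For every x ∈ X and every neighbourhood W of e, there exists a uniformly recurrent point y near e with y ∈ cl{T_s(x) : s ∈ S ∩ W} such that x and y are proximal near e. -/

import Mathlib

/-!
The ultrafilters `e*_S` form a compact right topological semigroup (closed under `+` because `e`
is idempotent and translations are continuous), so they have a closed minimal left ideal `L`,
which contains an idempotent `u`. Put `y = T_u x`. Then `T_u y = T_u x`, which is proximality,
and `y` lies in the closure of the `W`-orbit of `x` because `u` converges to `e`.

Uniform recurrence comes from minimality: every `q ∈ L` satisfies `r + q = u` for some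
`r ∈ e*_S`, so `T_r` brings `T_q y` back to `y`; by compactness of `{T_q y | q ∈ L}`, finitely
many `T_t` with `t` near `e` bring each of its points into a given neighbourhood of `y`. Since
`q + u ∈ L` and `T_(q + u) y = T_q y` for every `q ∈ e*_S`, this holds along every ultrafilter
converging to `e`, hence for all `s` in a neighbourhood of `e`.
-/

open Filter Topology Set

attribute [local instance] Ultrafilter.add Ultrafilter.addSemigroup

universe u

section NearIdem

variable {T : Type u} [AddSemigroup T] [TopologicalSpace T]

/-- The set of ultrafilters on `S` converging to `e` (denoted `e*_S`). -/
def EStar (S : AddSubsemigroup T) (e : T) : Set (Ultrafilter S) :=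
  {p | ∀ U ∈ nhds e, {s : S | (s : T) ∈ U} ∈ p}

/-- `B ⊆ S` is syndetic near `e`. -/
def SyndeticNear (S : AddSubsemigroup T) (e : T) (B : Set S) : Prop :=
  ∀ U ∈ nhds e, ∃ F : Finset S, (∀ t ∈ F, (t : T) ∈ U) ∧
    ∃ V ∈ nhds e, ∀ s : S, (s : T) ∈ V → ∃ t ∈ F, t + s ∈ B

/-- `A ⊆ S` is topologically piecewise syndetic near `e`. -/
def TopPWSNear (S : AddSubsemigroup T) (e : T) (A : Set S) : Prop :=
  ∀ U ∈ nhds e, ∃ F : Finset S, (∀ t ∈ F, (t : T) ∈ U) ∧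
    ∃ V ∈ nhds e, ∀ G : Finset S, ∀ O ∈ nhds e, ∃ x : S, (x : T) ∈ O ∧
      ∀ g ∈ G, (g : T) ∈ V → ∃ t ∈ F, t + (g + x) ∈ A

/-- Left ideal of a subsemigroup `E` of `βM`. -/
def IsLeftIdealIn {M : Type*} [AddSemigroup M] (E L : Set (Ultrafilter M)) : Prop :=
  L.Nonempty ∧ L ⊆ E ∧ ∀ p ∈ E, ∀ q ∈ L, p + q ∈ L

/-- Minimal left ideal of `E`. -/
def IsMinimalLeftIdealIn {M : Type*} [AddSemigroup M] (E L : Set (Ultrafilter M)) : Prop :=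
  IsLeftIdealIn E L ∧ ∀ L', IsLeftIdealIn E L' → L' ⊆ L → L' = L

/-- The smallest ideal `K(E)`, the union of all minimal left ideals of `E`. -/
def SmallestIdeal {M : Type*} [AddSemigroup M] (E : Set (Ultrafilter M)) : Set (Ultrafilter M) :=
  {p | ∃ L, IsMinimalLeftIdealIn E L ∧ p ∈ L}

/-- `T_p(x) = p`-`lim_(s ∈ S) T_s(x)`. -/
noncomputable def TP {M : Type*} {X : Type*} [TopologicalSpace X]
    (Ts : M → X → X) (p : Ultrafilter M) (x : X) : X :=
  (p.map fun s => Ts s x).lim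

/-- `x` is a uniformly recurrent point near `e`. -/
def UnifRecNear (S : AddSubsemigroup T) (e : T) {X : Type*} [TopologicalSpace X]
    (Ts : S → X → X) (x : X) : Prop :=
  ∀ W ∈ nhds x, SyndeticNear S e {s : S | Ts s x ∈ W}

/-- `x` and `y` are proximal near `e` (characterized via `e*_S`). -/
noncomputable def ProximalNear (S : AddSubsemigroup T) (e : T) {X : Type*} [TopologicalSpace X]
    (Ts : S → X → X) (x y : X) : Prop :=
  ∃ p ∈ EStar S e, TP Ts p x = TP Ts p y

section Limits

variable {M X : Type*} [TopologicalSpace X] [CompactSpace X] {Ts : M → X → X}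

theorem tendsto_tp (Ts : M → X → X) (p : Ultrafilter M) (x : X) :
    Tendsto (fun s => Ts s x) p (𝓝 (TP Ts p x)) :=
  Ultrafilter.le_nhds_lim _

theorem tp_eq_of_tendsto [T2Space X] {p : Ultrafilter M} {x c : X}
    (h : Tendsto (fun s => Ts s x) p (𝓝 c)) : TP Ts p x = c :=
  Ultrafilter.lim_eq_iff_le_nhds.2 h

theorem continuous_tp [T2Space X] (Ts : M → X → X) (x : X) :
    Continuous fun p : Ultrafilter M => TP Ts p x := by
  convert continuous_ultrafilter_extend fun s => Ts s x with p
  exact (ultrafilter_extend_eq_iff.2 (tendsto_tp Ts p x)).symm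

theorem tp_mem_closure_image (x : X) {p : Ultrafilter M} {A : Set M} (hA : A ∈ p) :
    TP Ts p x ∈ closure ((fun s => Ts s x) '' A) :=
  mem_closure_of_tendsto (tendsto_tp Ts p x) (mem_of_superset hA (subset_preimage_image _ A))

theorem tp_add [AddSemigroup M] [T2Space X] (hTcont : ∀ s, Continuous (Ts s))
    (hTact : ∀ s t z, Ts s (Ts t z) = Ts (s + t) z) (p q : Ultrafilter M) (x : X) :
    TP Ts (p + q) x = TP Ts p (TP Ts q x) := by
  refine tp_eq_of_tendsto fun O hO => ?_
  obtain ⟨O', hO'O, hO', hxO'⟩ := mem_nhds_iff.mp hO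
  have : ∀ᶠ s in (↑(p + q) : Filter M), Ts s x ∈ O' := by
    rw [Ultrafilter.eventually_add]
    filter_upwards [tendsto_tp Ts p _ (hO'.mem_nhds hxO')] with a ha
    filter_upwards [tendsto_tp Ts q x ((hO'.preimage (hTcont a)).mem_nhds ha)] with b hb
    rwa [← hTact]
  exact this.mono fun s hs => hO'O hs

end Limits

section LeftIdeals

variable {M : Type*} [AddSemigroup M] {E L : Set (Ultrafilter M)}

theorem isLeftIdealIn_image_add_right (hE : ∀ p ∈ E, ∀ q ∈ E, p + q ∈ E) {q : Ultrafilter M}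
    (hq : q ∈ E) : IsLeftIdealIn E ((· + q) '' E) := by
  refine ⟨⟨q + q, q, hq, rfl⟩, ?_, ?_⟩
  · rintro _ ⟨r, hr, rfl⟩
    exact hE r hr q hq
  · rintro p hp _ ⟨r, hr, rfl⟩
    exact ⟨p + r, hE p hp r hr, add_assoc p r q⟩

theorem isClosed_image_add_right (hE : IsClosed E) (q : Ultrafilter M) :
    IsClosed ((· + q) '' E) :=
  (hE.isCompact.image (Ultrafilter.continuous_add_left q)).isClosed

theorem IsLeftIdealIn.image_add_right_subset (hL : IsLeftIdealIn E L) {q : Ultrafilter M}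
    (hq : q ∈ L) : (· + q) '' E ⊆ L := by
  rintro _ ⟨r, hr, rfl⟩
  exact hL.2.2 r hr q hq

theorem IsMinimalLeftIdealIn.exists_add_eq (hE : ∀ p ∈ E, ∀ q ∈ E, p + q ∈ E)
    (hL : IsMinimalLeftIdealIn E L) {q u : Ultrafilter M} (hq : q ∈ L) (hu : u ∈ L) :
    ∃ r ∈ E, r + q = u := by
  have hEq : (· + q) '' E = L :=
    hL.2 _ (isLeftIdealIn_image_add_right hE (hL.1.2.1 hq)) (hL.1.image_add_right_subset hq)
  rw [← hEq] at hu
  exact hu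

theorem IsLeftIdealIn.exists_add_self (hL : IsLeftIdealIn E L) (hLc : IsClosed L) :
    ∃ u ∈ L, u + u = u :=
  exists_idempotent_in_compact_add_subsemigroup Ultrafilter.continuous_add_left L hL.1
    hLc.isCompact fun p hp q hq => hL.2.2 p (hL.2.1 hp) q hq

theorem isLeftIdealIn_sInter_of_isChain {c : Set (Set (Ultrafilter M))}
    (hc : ∀ L ∈ c, IsLeftIdealIn E L ∧ IsClosed L) (hchain : IsChain (· ⊆ ·) c)
    (hne : c.Nonempty) : IsLeftIdealIn E (⋂₀ c) := by
  obtain ⟨L, hL⟩ := hne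
  have : Nonempty c := ⟨⟨L, hL⟩⟩
  refine ⟨?_, (sInter_subset_of_mem hL).trans (hc L hL).1.2.1, fun p hp q hq => ?_⟩
  · exact IsCompact.nonempty_sInter_of_directed_nonempty_isCompact_isClosed
      (fun a ha b hb => (hchain.total ha hb).elim (fun h => ⟨a, ha, subset_rfl, h⟩)
        fun h => ⟨b, hb, h, subset_rfl⟩) (fun L hL => (hc L hL).1.1)
      (fun L hL => (hc L hL).2.isCompact) (fun L hL => (hc L hL).2)
  · exact mem_sInter.2 fun L hL => (hc L hL).1.2.2 p hp q (mem_sInter.1 hq L hL)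

theorem exists_isMinimalLeftIdealIn (hEc : IsClosed E) (hE : ∀ p ∈ E, ∀ q ∈ E, p + q ∈ E)
    (hne : E.Nonempty) : ∃ L, IsMinimalLeftIdealIn E L ∧ IsClosed L := by
  have hclosedIdeal : ∀ q ∈ E, IsLeftIdealIn E ((· + q) '' E) ∧ IsClosed ((· + q) '' E) :=
    fun q hq => ⟨isLeftIdealIn_image_add_right hE hq, isClosed_image_add_right hEc q⟩
  obtain ⟨q, hq⟩ := hne
  obtain ⟨L, -, hLmin⟩ := zorn_superset_nonempty {L | IsLeftIdealIn E L ∧ IsClosed L}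
    (fun c hc hchain hne => ⟨⋂₀ c, ⟨isLeftIdealIn_sInter_of_isChain hc hchain hne,
      isClosed_sInter fun L hL => (hc hL).2⟩, fun _ hs => sInter_subset_of_mem hs⟩)
    _ (hclosedIdeal q hq)
  refine ⟨L, ⟨hLmin.prop.1, fun L' hL' hL'L => ?_⟩, hLmin.prop.2⟩
  obtain ⟨q', hq'⟩ := hL'.1
  -- `E + q'` is a closed left ideal inside `L' ⊆ L`, so it is `L` by minimality among closed ones
  have hsub := hL'.image_add_right_subset hq'
  exact hL'L.antisymm ((hLmin.2 (hclosedIdeal q' (hL'.2.1 hq')) (hsub.trans hL'L)).trans hsub)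

end LeftIdeals

section EStarSemigroup

theorem mem_eStar_iff_tendsto {S : AddSubsemigroup T} {e : T} {p : Ultrafilter S} :
    p ∈ EStar S e ↔ Tendsto ((↑) : S → T) p (𝓝 e) :=
  Iff.rfl

theorem eStar_nonempty {S : AddSubsemigroup T} {e : T} (he : e ∈ closure (S : Set T)) :
    (EStar S e).Nonempty :=
  have := mem_closure_iff_comap_neBot.1 he
  ⟨Ultrafilter.of _, tendsto_iff_comap.2 (Ultrafilter.of_le _)⟩

theorem isClosed_eStar (S : AddSubsemigroup T) (e : T) : IsClosed (EStar S e) := by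
  simp only [EStar, ofPred_forall]
  exact isClosed_iInter fun U => isClosed_iInter fun _ => ultrafilter_isClosed_basic _

theorem eventually_eventually_add_mem_nhds (hl : ∀ t : T, Continuous fun x : T => t + x)
    (hr : ∀ t : T, Continuous fun x : T => x + t) {e : T} (he : e + e = e) {U : Set T}
    (hU : U ∈ 𝓝 e) : ∀ᶠ a in 𝓝 e, ∀ᶠ b in 𝓝 e, a + b ∈ U := by
  obtain ⟨O, hOU, hO, heO⟩ := mem_nhds_iff.mp hU
  have hre : Tendsto (· + e) (𝓝 e) (𝓝 e) := by simpa only [he] using (hr e).tendsto e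
  filter_upwards [hre (hO.mem_nhds heO)] with a ha
  exact mem_of_superset ((hl a).tendsto e (hO.mem_nhds ha)) fun b hb => hOU hb

theorem add_mem_eStar (hl : ∀ t : T, Continuous fun x : T => t + x)
    (hr : ∀ t : T, Continuous fun x : T => x + t) {S : AddSubsemigroup T} {e : T} (he : e + e = e)
    {p q : Ultrafilter S} (hp : p ∈ EStar S e) (hq : q ∈ EStar S e) : p + q ∈ EStar S e := by
  intro U hU
  show ∀ᶠ c in (↑(p + q) : Filter S), ((c : S) : T) ∈ U
  rw [Ultrafilter.eventually_add]
  filter_upwards [(mem_eStar_iff_tendsto.1 hp).eventually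
    (eventually_eventually_add_mem_nhds hl hr he hU)] with a ha
  exact (mem_eStar_iff_tendsto.1 hq).eventually ha

theorem mem_comap_nhds_of_forall_mem_eStar {S : AddSubsemigroup T} {e : T} {A : Set S}
    (hA : ∀ q ∈ EStar S e, A ∈ q) : A ∈ comap ((↑) : S → T) (𝓝 e) :=
  mem_iff_ultrafilter.2 fun q hq => hA q (tendsto_iff_comap.2 hq)

end EStarSemigroup

section Recurrence

variable {S : AddSubsemigroup T} {e : T} {X : Type*} [TopologicalSpace X] [CompactSpace X]
  [T2Space X] {Ts : S → X → X} {L : Set (Ultrafilter S)} {u : Ultrafilter S} {y : X}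

theorem exists_finset_forall_tp_mem (hTcont : ∀ s, Continuous (Ts s))
    (hTact : ∀ s t z, Ts s (Ts t z) = Ts (s + t) z)
    (hEadd : ∀ p ∈ EStar S e, ∀ q ∈ EStar S e, p + q ∈ EStar S e)
    (hL : IsMinimalLeftIdealIn (EStar S e) L) (hLc : IsClosed L) (hu : u ∈ L)
    (hy : TP Ts u y = y) {O : Set X} (hO : IsOpen O) (hyO : y ∈ O) {U : Set T}
    (hU : U ∈ 𝓝 e) :
    ∃ F : Finset S, (∀ t ∈ F, (t : T) ∈ U) ∧ ∀ q ∈ L, ∃ t ∈ F, Ts t (TP Ts q y) ∈ O := by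
  have hcover : (fun q => TP Ts q y) '' L ⊆ ⋃ t ∈ {t : S | (t : T) ∈ U}, Ts t ⁻¹' O := by
    rintro _ ⟨q, hq, rfl⟩
    obtain ⟨r, hr, hru⟩ := hL.exists_add_eq hEadd hq hu
    have hrq : TP Ts r (TP Ts q y) ∈ O := by rwa [← tp_add hTcont hTact, hru, hy]
    have hrO : ∀ᶠ s in (r : Filter S), Ts s (TP Ts q y) ∈ O :=
      tendsto_tp Ts r _ (hO.mem_nhds hrq)
    obtain ⟨t, hty, htU⟩ := (hrO.and (hr U hU)).exists
    exact mem_biUnion htU hty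
  obtain ⟨F, hFU, hF, hcover'⟩ := (hLc.isCompact.image (continuous_tp Ts y))
    |>.elim_finite_subcover_image (fun t _ => hO.preimage (hTcont t)) hcover
  refine ⟨hF.toFinset, fun t ht => hFU (hF.mem_toFinset.1 ht), fun q hq => ?_⟩
  obtain ⟨t, ht, htq⟩ := mem_iUnion₂.1 (hcover' ⟨q, hq, rfl⟩)
  exact ⟨t, hF.mem_toFinset.2 ht, htq⟩

theorem unifRecNear_of_tp_eq_self (hTcont : ∀ s, Continuous (Ts s))
    (hTact : ∀ s t z, Ts s (Ts t z) = Ts (s + t) z)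
    (hEadd : ∀ p ∈ EStar S e, ∀ q ∈ EStar S e, p + q ∈ EStar S e)
    (hL : IsMinimalLeftIdealIn (EStar S e) L) (hLc : IsClosed L) (hu : u ∈ L)
    (hy : TP Ts u y = y) : UnifRecNear S e Ts y := by
  intro W hW U hU
  obtain ⟨O, hOW, hO, hyO⟩ := mem_nhds_iff.mp hW
  obtain ⟨F, hFU, hF⟩ := exists_finset_forall_tp_mem hTcont hTact hEadd hL hLc hu hy hO hyO hU
  refine ⟨F, hFU, ?_⟩
  have hmem : ∀ q ∈ EStar S e, {s : S | ∃ t ∈ F, t + s ∈ {s | Ts s y ∈ W}} ∈ q := by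
    intro q hq
    obtain ⟨t, htF, ht⟩ := hF (q + u) (hL.1.2.2 q hq u hu)
    rw [tp_add hTcont hTact, hy] at ht
    filter_upwards [tendsto_tp Ts q y ((hO.preimage (hTcont t)).mem_nhds ht)] with s hs
    exact ⟨t, htF, hOW (hTact t s y ▸ hs)⟩
  obtain ⟨V, hV, hVsub⟩ := mem_comap.1 (mem_comap_nhds_of_forall_mem_eStar hmem)
  exact ⟨V, hV, fun s hs => hVsub hs⟩

end Recurrence

variable [T2Space T]

/-- Every point is proximal near `e` to a uniformly recurrent point near `e`
in the closure of its `W`-orbit, for each neighbourhood `W` of `e`. -/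
theorem exists_unifRecNear_proximal (S : AddSubsemigroup T) (hdense : Dense (S : Set T))
    (hl : ∀ t : T, Continuous fun x : T => t + x)
    (hr : ∀ t : T, Continuous fun x : T => x + t)
    (e : T) (he : e + e = e)
    {X : Type u} [TopologicalSpace X] [CompactSpace X] [T2Space X]
    (Ts : S → X → X) (hTcont : ∀ s, Continuous (Ts s))
    (hTact : ∀ s t z, Ts s (Ts t z) = Ts (s + t) z) (x : X) (W : Set T) (hW : W ∈ nhds e) :
    ∃ y : X, UnifRecNear S e Ts y ∧
      y ∈ closure ((fun s : S => Ts s x) '' {s : S | (s : T) ∈ W}) ∧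
      ProximalNear S e Ts x y := by
  have hEadd : ∀ p ∈ EStar S e, ∀ q ∈ EStar S e, p + q ∈ EStar S e :=
    fun p hp q hq => add_mem_eStar hl hr he hp hq
  obtain ⟨L, hL, hLc⟩ :=
    exists_isMinimalLeftIdealIn (isClosed_eStar S e) hEadd (eStar_nonempty (hdense e))
  obtain ⟨u, huL, huu⟩ := hL.1.exists_add_self hLc
  have huE : u ∈ EStar S e := hL.1.2.1 huL
  have hfix : TP Ts u (TP Ts u x) = TP Ts u x := by rw [← tp_add hTcont hTact, huu]
  exact ⟨TP Ts u x, unifRecNear_of_tp_eq_self hTcont hTact hEadd hL hLc huL hfix,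
    tp_mem_closure_image x (huE W hW), u, huE, hfix.symm⟩

end NearIdem
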